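/- If i < n satisfies max(DY i) > α, then every value v ∈ DY i with v < max(DY i) is inconsistent (i.e., not consistent). -/

import Mathlib

namespace MsetPaper

/-- The maximum element of a multiset of naturals (`0` for the empty multiset). -/
def mmax (s : Multiset ℕ) : ℕ := s.sup

/-- The strict multiset order `x <ₘ y` of the paper: either `x` is empty and `y` is not,
or both are nonempty and either `max x < max y`, or the maxima agree and the multisets
with one occurrence of the maximum removed are again strictly ordered. -/
inductive MLt : Multiset ℕ → Multiset ℕ → Prop
  | empty {y : Multiset ℕ} : y ≠ 0 → MLt 0 y
  | maxLt {x y : Multiset ℕ} : x ≠ 0 → y ≠ 0 → mmax x < mmax y → MLt x y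
  | maxEq {x y : Multiset ℕ} : x ≠ 0 → y ≠ 0 → mmax x = mmax y →
      MLt (x.erase (mmax x)) (y.erase (mmax y)) → MLt x y

/-- The (non-strict) multiset order `x ≤ₘ y`. -/
def MLe (x y : Multiset ℕ) : Prop := MLt x y ∨ x = y

/-- The multiset of values taken by a vector. -/
def msetOf {n : ℕ} (x : Fin n → ℕ) : Multiset ℕ := (List.ofFn x : List ℕ)

/-- `(x, y)` is a satisfying assignment for the constraint `X ≤ₘ Y`. -/
def SatLe {n : ℕ} (DX DY : Fin n → Finset ℕ) (x y : Fin n → ℕ) : Prop :=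
  (∀ i, x i ∈ DX i) ∧ (∀ i, y i ∈ DY i) ∧ MLe (msetOf x) (msetOf y)

/-- The value `v` is consistent for the variable `X i`. -/
def ConsX {n : ℕ} (DX DY : Fin n → Finset ℕ) (i : Fin n) (v : ℕ) : Prop :=
  ∃ x y, SatLe DX DY x y ∧ x i = v

/-- The value `v` is consistent for the variable `Y i`. -/
def ConsY {n : ℕ} (DX DY : Fin n → Finset ℕ) (i : Fin n) (v : ℕ) : Prop :=
  ∃ x y, SatLe DX DY x y ∧ y i = v

/-- The constraint `X ≤ₘ Y` is generalised arc-consistent. -/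
def GACLe {n : ℕ} (DX DY : Fin n → Finset ℕ) : Prop :=
  (∀ i, ∀ v ∈ DX i, ConsX DX DY i v) ∧ (∀ i, ∀ v ∈ DY i, ConsY DX DY i v)

/-- `cx DX hDX v` counts the indices `i` with `min (DX i) = v`
(the occurrence vector of `floor(X)`). -/
def cx {n : ℕ} (DX : Fin n → Finset ℕ) (hDX : ∀ i, (DX i).Nonempty) (v : ℕ) : ℕ :=
  (Finset.univ.filter fun i => (DX i).min' (hDX i) = v).card

/-- `cy DY hDY v` counts the indices `i` with `max (DY i) = v`
(the occurrence vector of `ceiling(Y)`). -/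
def cy {n : ℕ} (DY : Fin n → Finset ℕ) (hDY : ∀ i, (DY i).Nonempty) (v : ℕ) : ℕ :=
  (Finset.univ.filter fun i => (DY i).max' (hDY i) = v).card

/-!
The lower bounds `min (DX j)` and the upper bounds `max (DY j)`, with the `i`-th one lowered to
`v`, bracket any satisfying assignment with `y i = v`:
`floor(X) ≤ₘ X ≤ₘ Y ≤ₘ ceiling(Y)[i ↦ v]`, since `≤ₘ` is monotone under pointwise `≤`.
But with `β = max (DY i) > α`, the hypothesis makes `floor(X)` and `ceiling(Y)` agree in
multiplicities at and above `β`, and lowering the `i`-th entry loses one occurrence of `β`,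
so `ceiling(Y)[i ↦ v] <ₘ floor(X)`.
-/

open Finsupp

/-- On multiplicity vectors the colex order compares the largest value with differing
multiplicities, which is how `<ₘ` unfolds: it is a strict order compatible with `+`. -/
noncomputable def colexCount (s : Multiset ℕ) : Colex (ℕ →₀ ℕ) := toColex (Multiset.toFinsupp s)

lemma colexCount_cons (a : ℕ) (s : Multiset ℕ) :
    colexCount (a ::ₘ s) = toColex (single a 1) + colexCount s := by
  simp [colexCount, ← Multiset.singleton_add]

lemma colexCount_lt_iff {s t : Multiset ℕ} : colexCount s < colexCount t ↔
    ∃ β, (∀ b, β < b → s.count b = t.count b) ∧ s.count β < t.count β :=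
  Colex.lt_iff

lemma mmax_mem {s : Multiset ℕ} (h : s ≠ 0) : mmax s ∈ s := by
  obtain ⟨a, ha, hmax⟩ := s.exists_max_image id h
  rwa [mmax, le_antisymm (Multiset.sup_le.2 hmax) (Multiset.le_sup ha)]

lemma colexCount_lt_of_forall_lt_mmax {s t : Multiset ℕ} (ht : t ≠ 0)
    (hs : ∀ a ∈ s, a < mmax t) : colexCount s < colexCount t := by
  have count_eq_zero_of_lt : ∀ {u : Multiset ℕ} {b}, (∀ a ∈ u, a < b) → u.count b = 0 :=
    fun hu => Multiset.count_eq_zero.2 fun hb => (hu _ hb).false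
  refine colexCount_lt_iff.2 ⟨mmax t, fun b hb => ?_, ?_⟩
  · rw [count_eq_zero_of_lt fun a ha => (hs a ha).trans hb,
      count_eq_zero_of_lt fun a ha => (Multiset.le_sup ha).trans_lt hb]
  · rw [count_eq_zero_of_lt hs]
    exact Multiset.count_pos.2 (mmax_mem ht)

lemma MLt.colexCount_lt {s t : Multiset ℕ} (h : MLt s t) : colexCount s < colexCount t := by
  induction h with
  | empty hy => exact colexCount_lt_of_forall_lt_mmax hy (by simp)
  | maxLt _ hy hlt =>
    exact colexCount_lt_of_forall_lt_mmax hy fun a ha => (Multiset.le_sup ha).trans_lt hlt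
  | maxEq hx hy heq _ ih =>
    rw [← Multiset.cons_erase (mmax_mem hx), ← Multiset.cons_erase (mmax_mem hy),
      colexCount_cons, colexCount_cons, heq]
    rw [heq] at ih
    gcongr

lemma MLe.colexCount_le {s t : Multiset ℕ} (h : MLe s t) : colexCount s ≤ colexCount t :=
  h.elim (fun h => h.colexCount_lt.le) fun h => h ▸ le_rfl

lemma colexCount_map_le_map {ι : Type*} {f g : ι → ℕ} (m : Multiset ι) (h : ∀ j ∈ m, f j ≤ g j) :
    colexCount (m.map f) ≤ colexCount (m.map g) := by
  induction m using Multiset.induction with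
  | empty => simp
  | cons a m ih =>
    simp only [Multiset.map_cons, colexCount_cons]
    exact add_le_add (Colex.single_le_iff.2 (h a (by simp))) (ih fun j hj => h j (by simp [hj]))

lemma msetOf_eq_map {n : ℕ} (w : Fin n → ℕ) : msetOf w = Finset.univ.val.map w := by
  simp [msetOf, List.ofFn_eq_map]

lemma msetOf_update {n : ℕ} (w : Fin n → ℕ) (i : Fin n) (v : ℕ) :
    msetOf (Function.update w i v) = v ::ₘ (msetOf w).erase (w i) := by
  have huniv : (Finset.univ : Finset (Fin n)).val = i ::ₘ (Finset.univ.erase i).val := by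
    rw [Finset.erase_val, Multiset.cons_erase (Finset.mem_univ_val i)]
  have hrest : (Finset.univ.erase i).val.map (Function.update w i v) =
      (Finset.univ.erase i).val.map w :=
    Multiset.map_congr rfl fun j hj =>
      Function.update_of_ne (Finset.ne_of_mem_erase (s := Finset.univ) hj) _ _
  simp only [msetOf_eq_map, huniv, Multiset.map_cons, Function.update_self, hrest,
    Multiset.erase_cons_head]

lemma count_msetOf {n : ℕ} (w : Fin n → ℕ) (b : ℕ) :
    (msetOf w).count b = (Finset.univ.filter fun j => w j = b).card := by
  rw [msetOf_eq_map, Multiset.count_map]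
  simp only [eq_comm]
  rfl

lemma colexCount_cons_erase_lt {s t : Multiset ℕ} {a v : ℕ} (hv : v < a) (ha : a ∈ s)
    (hst : ∀ b, a ≤ b → s.count b = t.count b) : colexCount (v ::ₘ s.erase a) < colexCount t := by
  refine colexCount_lt_iff.2 ⟨a, fun b hb => ?_, ?_⟩
  · rw [Multiset.count_cons_of_ne (hv.trans hb).ne', Multiset.count_erase_of_ne hb.ne',
      hst b hb.le]
  · rw [Multiset.count_cons_of_ne hv.ne', Multiset.count_erase_self, ← hst a le_rfl]
    exact Nat.sub_lt (Multiset.count_pos.2 ha) one_pos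

theorem stmt15_general (n : ℕ) (DX DY : Fin n → Finset ℕ)
    (hDX : ∀ i, (DX i).Nonempty) (hDY : ∀ i, (DY i).Nonempty)
    (α : ℕ)
    (hα2 : ∀ b : ℕ, α < b → cx DX hDX b = cy DY hDY b)
    (i : Fin n) (hi : α < (DY i).max' (hDY i)) :
    ∀ v ∈ DY i, v < (DY i).max' (hDY i) → ¬ ConsY DX DY i v := by
  rintro v - hv ⟨x, y, ⟨hx, hy, hxy⟩, rfl⟩
  set floor : Fin n → ℕ := fun j => (DX j).min' (hDX j)
  set ceil : Fin n → ℕ := fun j => (DY j).max' (hDY j)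
  have hfloor : colexCount (msetOf floor) ≤ colexCount (msetOf x) := by
    simpa only [msetOf_eq_map] using colexCount_map_le_map _ fun j _ => (DX j).min'_le _ (hx j)
  have hceil : colexCount (msetOf y) ≤ colexCount (msetOf (Function.update ceil i (y i))) := by
    simp only [msetOf_eq_map]
    refine colexCount_map_le_map _ fun j _ => ?_
    rcases eq_or_ne j i with rfl | hj
    · simp
    · simpa [hj] using (DY j).le_max' _ (hy j)
  have hlt : colexCount (msetOf (Function.update ceil i (y i))) < colexCount (msetOf floor) := by
    rw [msetOf_update]
    refine colexCount_cons_erase_lt hv (by simp [msetOf_eq_map]) fun b hb => ?_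
    rw [count_msetOf, count_msetOf]
    exact (hα2 b (hi.trans_le hb)).symm
  exact (hfloor.trans (hxy.colexCount_le.trans hceil)).not_gt hlt

/-- If `max(DY i) > α` then every value of `DY i` below `max(DY i)` is inconsistent. -/
theorem stmt15 (n : ℕ) (hn : 1 ≤ n) (DX DY : Fin n → Finset ℕ)
    (hDX : ∀ i, (DX i).Nonempty) (hDY : ∀ i, (DY i).Nonempty)
    (α : ℕ)
    (hα1 : cx DX hDX α < cy DY hDY α)
    (hα2 : ∀ b : ℕ, α < b → cx DX hDX b = cy DY hDY b)
    (i : Fin n) (hi : α < (DY i).max' (hDY i)) :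
    ∀ v ∈ DY i, v < (DY i).max' (hDY i) → ¬ ConsY DX DY i v :=
  stmt15_general n DX DY hDX hDY α hα2 i hi

end MsetPaper
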